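/- arXiv:2007.03279 — 6 statements merged into one kernel-verified Lean document; each statement's English description precedes it below -/
import Mathlib

section
/- Let J: ℝ⁴ → ℝ⁴ be given by J(x₁,x₂,y₁,y₂) = (-x₂, x₁, y₂, -y₁), and let X(r,φ) = (r cos φ, (λ/r) cos φ, r sin φ, -(λ/r) sin φ). Then the tangent vectors X_r, X_φ are orthogonal to JX_r and to JX_φ at every point; in particular X is a Lagrangian immersion with respect to the complex structure J. -/
/-!
The bilinear form `(u, v) ↦ ⟪u, J v⟫` is antisymmetric (`J` is orthogonal with `J² = -1`), so
`⟪X_r, J X_r⟫ = ⟪X_φ, J X_φ⟫ = 0` for free and the two mixed terms are negatives of each other.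
Only `⟪X_r, J X_φ⟫` has to be computed: its four summands are `± (λ / r) cos φ sin φ`,
two of each sign.
-/

noncomputable def X (lam r φ : ℝ) : EuclideanSpace ℝ (Fin 4) :=
  (WithLp.equiv 2 (Fin 4 → ℝ)).symm
    ![r * Real.cos φ, (lam / r) * Real.cos φ, r * Real.sin φ, -(lam / r) * Real.sin φ]

noncomputable def Jmap (v : EuclideanSpace ℝ (Fin 4)) : EuclideanSpace ℝ (Fin 4) :=
  (WithLp.equiv 2 (Fin 4 → ℝ)).symm ![-(v 1), v 0, v 3, -(v 2)]

theorem hasDerivAt_piLp {𝕜 ι : Type*} [NontriviallyNormedField 𝕜] [Fintype ι] {p : ENNReal}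
    [Fact (1 ≤ p)] {E : ι → Type*} [∀ i, NormedAddCommGroup (E i)] [∀ i, NormedSpace 𝕜 (E i)]
    {f : 𝕜 → PiLp p E} {f' : PiLp p E} {x : 𝕜} :
    HasDerivAt f f' x ↔ ∀ i, HasDerivAt (fun t => f t i) (f' i) x := by
  rw [hasDerivAt_iff_hasFDerivAt, ← (PiLp.continuousLinearEquiv p 𝕜 E).comp_hasFDerivAt_iff,
    hasFDerivAt_pi']
  simp only [hasDerivAt_iff_hasFDerivAt]
  rfl

theorem inner_Jmap (u v : EuclideanSpace ℝ (Fin 4)) :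
    inner ℝ u (Jmap v) = -(u 0 * v 1) + u 1 * v 0 + u 2 * v 3 - u 3 * v 2 := by
  simp only [Jmap, WithLp.equiv_symm_apply, PiLp.inner_apply, RCLike.inner_apply,
    Real.ringHom_apply, Fin.sum_univ_four, Matrix.cons_val_zero, Matrix.cons_val_one,
    Matrix.cons_val]
  ring

theorem inner_Jmap_comm (u v : EuclideanSpace ℝ (Fin 4)) :
    inner ℝ u (Jmap v) = -inner ℝ v (Jmap u) := by
  rw [inner_Jmap, inner_Jmap]
  ring

theorem inner_self_Jmap (v : EuclideanSpace ℝ (Fin 4)) : inner ℝ v (Jmap v) = 0 := by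
  linarith [inner_Jmap_comm v v]

theorem hasDerivAt_X_radius (lam r φ : ℝ) (hr : r ≠ 0) :
    HasDerivAt (fun s => X lam s φ)
      !₂[Real.cos φ, -(lam / r ^ 2) * Real.cos φ, Real.sin φ, lam / r ^ 2 * Real.sin φ] r := by
  have hinv : HasDerivAt (fun s => lam / s) (-(lam / r ^ 2)) r := by
    simpa [div_eq_mul_inv, neg_div] using (hasDerivAt_inv hr).const_mul lam
  refine hasDerivAt_piLp.2 fun i => ?_
  fin_cases i
  · simpa [X] using hasDerivAt_mul_const (Real.cos φ)
  · simpa [X] using hinv.mul_const (Real.cos φ)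
  · simpa [X] using hasDerivAt_mul_const (Real.sin φ)
  · simpa [X] using hinv.neg.mul_const (Real.sin φ)

theorem hasDerivAt_X_angle (lam r φ : ℝ) :
    HasDerivAt (fun ψ => X lam r ψ)
      !₂[-(r * Real.sin φ), -(lam / r * Real.sin φ), r * Real.cos φ, -(lam / r) * Real.cos φ] φ := by
  refine hasDerivAt_piLp.2 fun i => ?_
  fin_cases i
  · simpa [X] using (Real.hasDerivAt_cos φ).const_mul r
  · simpa [X] using (Real.hasDerivAt_cos φ).const_mul (lam / r)
  · simpa [X] using (Real.hasDerivAt_sin φ).const_mul r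
  · simpa [X] using (Real.hasDerivAt_sin φ).const_mul (-(lam / r))

theorem inner_deriv_radius_Jmap_deriv_angle (lam r φ : ℝ) (hr : r ≠ 0) :
    inner ℝ (deriv (fun s => X lam s φ) r) (Jmap (deriv (fun ψ => X lam r ψ) φ)) = 0 := by
  rw [(hasDerivAt_X_radius lam r φ hr).deriv, (hasDerivAt_X_angle lam r φ).deriv, inner_Jmap]
  simp only [Matrix.cons_val_zero, Matrix.cons_val_one, Matrix.cons_val]
  field_simp
  ring

theorem stmt2_general (lam : ℝ) (r φ : ℝ) (hr : 0 < r) :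
    (inner ℝ (deriv (fun s => X lam s φ) r) (Jmap (deriv (fun s => X lam s φ) r)) : ℝ) = 0 ∧
    (inner ℝ (deriv (fun s => X lam s φ) r) (Jmap (deriv (fun ψ => X lam r ψ) φ)) : ℝ) = 0 ∧
    (inner ℝ (deriv (fun ψ => X lam r ψ) φ) (Jmap (deriv (fun s => X lam s φ) r)) : ℝ) = 0 ∧
    (inner ℝ (deriv (fun ψ => X lam r ψ) φ) (Jmap (deriv (fun ψ => X lam r ψ) φ)) : ℝ) = 0 := by
  have hmixed := inner_deriv_radius_Jmap_deriv_angle lam r φ hr.ne'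
  refine ⟨inner_self_Jmap _, hmixed, ?_, inner_self_Jmap _⟩
  rw [inner_Jmap_comm, hmixed, neg_zero]

/-- the tangent vectors `X_r, X_φ` are orthogonal to `JX_r` and `JX_φ`,
i.e. `X` is a Lagrangian immersion with respect to `J`. -/
theorem stmt2 (lam : ℝ) (hlam : lam ≠ 0) (r φ : ℝ) (hr : 0 < r) :
    (inner ℝ (deriv (fun s => X lam s φ) r) (Jmap (deriv (fun s => X lam s φ) r)) : ℝ) = 0 ∧
    (inner ℝ (deriv (fun s => X lam s φ) r) (Jmap (deriv (fun ψ => X lam r ψ) φ)) : ℝ) = 0 ∧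
    (inner ℝ (deriv (fun ψ => X lam r ψ) φ) (Jmap (deriv (fun s => X lam s φ) r)) : ℝ) = 0 ∧
    (inner ℝ (deriv (fun ψ => X lam r ψ) φ) (Jmap (deriv (fun ψ => X lam r ψ) φ)) : ℝ) = 0 :=
  stmt2_general lam r φ hr
end

section
/- Let 0 < |λ| < 1/2 and r_± = √(1/2 ± √(1/4 - λ²)). On the boundary circle r = r_±, the vector ν_± = ±(r_± cos φ, -(λ/r_±) cos φ, r_± sin φ, (λ/r_±) sin φ) is a unit vector tangent to Σ_λ (a multiple of X_r), orthogonal to X_φ, and satisfies ν_± = √(1-4λ²)·X ∓ 2λ·JX, where X is the position vector and J(x₁,x₂,y₁,y₂) = (-x₂,x₁,y₂,-y₁). -/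
/-- The conormal `ν_ε = ε (r_ε cos φ, -(λ/r_ε) cos φ, r_ε sin φ, (λ/r_ε) sin φ)`,
where `ε = ±1` and `r_ε = √(1/2 + ε √(1/4 - λ²))`. -/
noncomputable def nu (lam ε φ : ℝ) : EuclideanSpace ℝ (Fin 4) :=
  ε • ((WithLp.equiv 2 (Fin 4 → ℝ)).symm
    ![Real.sqrt (1 / 2 + ε * Real.sqrt (1 / 4 - lam ^ 2)) * Real.cos φ,
      -(lam / Real.sqrt (1 / 2 + ε * Real.sqrt (1 / 4 - lam ^ 2))) * Real.cos φ,
      Real.sqrt (1 / 2 + ε * Real.sqrt (1 / 4 - lam ^ 2)) * Real.sin φ,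
      (lam / Real.sqrt (1 / 2 + ε * Real.sqrt (1 / 4 - lam ^ 2))) * Real.sin φ])

/-!
On the circle of radius `r` the vector `(r cos φ, -(λ/r) cos φ, r sin φ, (λ/r) sin φ)` equals
`r X_r`, and it is orthogonal to `X_φ` for every `r`. Its squared length is `r² + λ²/r²`, which
is `1` exactly when `r⁴ - r² + λ² = 0`, i.e. `r² = 1/2 ± √(1/4 - λ²)`; the same quadratic relation
gives the decomposition into `X` and `JX`.
-/

open Real

namespace LagrangianCatenoid

/-- The radius `r_ε = √(1/2 + ε √(1/4 - λ²))` of a boundary circle of `Σ_λ ∩ 𝔹⁴`. -/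
noncomputable def boundaryRadius (lam ε : ℝ) : ℝ :=
  √(1 / 2 + ε * √(1 / 4 - lam ^ 2))

noncomputable def conormal (lam r φ : ℝ) : EuclideanSpace ℝ (Fin 4) :=
  (WithLp.equiv 2 (Fin 4 → ℝ)).symm
    ![r * cos φ, -(lam / r) * cos φ, r * sin φ, (lam / r) * sin φ]

lemma nu_eq_smul_conormal (lam ε φ : ℝ) :
    nu lam ε φ = ε • conormal lam (boundaryRadius lam ε) φ := rfl

lemma _root_.HasDerivAt.toLp {ι : Type*} [Fintype ι] {f : ℝ → ι → ℝ} {f' : ι → ℝ} {x : ℝ}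
    (h : HasDerivAt f f' x) :
    HasDerivAt (fun t => WithLp.toLp 2 (f t)) (WithLp.toLp 2 f') x :=
  (PiLp.hasFDerivAt_toLp (𝕜 := ℝ) 2 (f x)).comp_hasDerivAt x h

section

variable (lam φ : ℝ)

lemma hasDerivAt_X_radius {r : ℝ} (hr : r ≠ 0) :
    HasDerivAt (fun s => X lam s φ)
      ((WithLp.equiv 2 (Fin 4 → ℝ)).symm
        ![cos φ, -(lam / r ^ 2) * cos φ, sin φ, (lam / r ^ 2) * sin φ]) r := by
  have hdiv : HasDerivAt (fun s : ℝ => lam / s) (-(lam / r ^ 2)) r := by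
    simpa [div_eq_mul_inv] using (hasDerivAt_inv hr).const_mul lam
  apply HasDerivAt.toLp
  rw [hasDerivAt_pi]
  intro i
  fin_cases i
  · simpa using (hasDerivAt_id r).mul_const (cos φ)
  · exact hdiv.mul_const (cos φ)
  · simpa using (hasDerivAt_id r).mul_const (sin φ)
  · simpa using hdiv.neg.mul_const (sin φ)

lemma hasDerivAt_X_angle (r : ℝ) :
    HasDerivAt (fun ψ => X lam r ψ)
      ((WithLp.equiv 2 (Fin 4 → ℝ)).symm
        ![-(r * sin φ), -((lam / r) * sin φ), r * cos φ, -((lam / r) * cos φ)]) φ := by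
  apply HasDerivAt.toLp
  rw [hasDerivAt_pi]
  intro i
  fin_cases i
  · simpa [mul_comm] using (hasDerivAt_cos φ).const_mul r
  · simpa [mul_comm] using (hasDerivAt_cos φ).const_mul (lam / r)
  · simpa [mul_comm] using (hasDerivAt_sin φ).const_mul r
  · simpa [mul_comm] using (hasDerivAt_sin φ).const_mul (-(lam / r))

lemma conormal_eq_smul_deriv_radius {r : ℝ} (hr : r ≠ 0) :
    conormal lam r φ = r • deriv (fun s => X lam s φ) r := by
  rw [(hasDerivAt_X_radius lam φ hr).deriv]
  ext i
  fin_cases i <;>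
    simp only [conormal, WithLp.equiv_symm_apply, PiLp.smul_apply, smul_eq_mul, Fin.isValue,
      Fin.zero_eta, Fin.mk_one, Fin.reduceFinMk, Matrix.cons_val_zero, Matrix.cons_val_one,
      Matrix.cons_val, neg_mul, mul_neg, neg_inj] <;>
    field_simp

lemma inner_conormal_deriv_angle (r : ℝ) :
    inner ℝ (conormal lam r φ) (deriv (fun ψ => X lam r ψ) φ) = 0 := by
  rw [(hasDerivAt_X_angle lam φ r).deriv]
  simp only [conormal, WithLp.equiv_symm_apply, PiLp.inner_apply, RCLike.inner_apply,
    ringHom_apply, Fin.sum_univ_four, Fin.isValue, Matrix.cons_val_zero, Matrix.cons_val_one,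
    Matrix.cons_val]
  ring

lemma norm_conormal (r : ℝ) : ‖conormal lam r φ‖ = √(r ^ 2 + (lam / r) ^ 2) := by
  rw [EuclideanSpace.norm_eq]
  congr 1
  simp only [conormal, WithLp.equiv_symm_apply, norm_eq_abs, sq_abs, Fin.sum_univ_four,
    Fin.isValue, Matrix.cons_val_zero, Matrix.cons_val_one, Matrix.cons_val, neg_mul, even_two,
    Even.neg_pow]
  linear_combination (r ^ 2 + (lam / r) ^ 2) * sin_sq_add_cos_sq φ

lemma smul_conormal_eq_sub_smul_J {r a b c : ℝ} (hr : r ≠ 0)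
    (h₁ : a * r ^ 2 + b * lam = c * r ^ 2) (h₂ : a * lam - b * r ^ 2 = -(c * lam)) :
    c • conormal lam r φ = a • X lam r φ - b • Jmap (X lam r φ) := by
  ext i
  fin_cases i <;>
    simp only [conormal, X, Jmap, WithLp.equiv_symm_apply, PiLp.smul_apply, PiLp.sub_apply,
      smul_eq_mul, Fin.isValue, Fin.zero_eta, Fin.mk_one, Fin.reduceFinMk, Matrix.cons_val_zero,
      Matrix.cons_val_one, Matrix.cons_val, neg_mul, mul_neg, sub_neg_eq_add] <;>
    field_simp
  · linear_combination -(cos φ * h₁)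
  · linear_combination -(cos φ * h₂)
  · linear_combination -(sin φ * h₁)
  · linear_combination sin φ * h₂

end

section

variable {lam ε : ℝ}

lemma one_half_add_mul_sqrt_pos (hε : ε ^ 2 = 1) (h0 : 0 < lam ^ 2) (h12 : lam ^ 2 < 1 / 4) :
    0 < 1 / 2 + ε * √(1 / 4 - lam ^ 2) := by
  have hs2 : √(1 / 4 - lam ^ 2) ^ 2 = 1 / 4 - lam ^ 2 := sq_sqrt (by linarith)
  have hs : √(1 / 4 - lam ^ 2) < 1 / 2 := by nlinarith [sqrt_nonneg (1 / 4 - lam ^ 2)]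
  nlinarith [sqrt_nonneg (1 / 4 - lam ^ 2), sq_nonneg (ε + 1), sq_nonneg (ε - 1)]

lemma boundaryRadius_pos (hε : ε ^ 2 = 1) (h0 : 0 < lam ^ 2) (h12 : lam ^ 2 < 1 / 4) :
    0 < boundaryRadius lam ε :=
  sqrt_pos.2 (one_half_add_mul_sqrt_pos hε h0 h12)

lemma boundaryRadius_sq (hε : ε ^ 2 = 1) (h0 : 0 < lam ^ 2) (h12 : lam ^ 2 < 1 / 4) :
    boundaryRadius lam ε ^ 2 = 1 / 2 + ε * √(1 / 4 - lam ^ 2) :=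
  sq_sqrt (one_half_add_mul_sqrt_pos hε h0 h12).le

lemma boundaryRadius_sq_add_div_sq (hε : ε ^ 2 = 1) (h0 : 0 < lam ^ 2) (h12 : lam ^ 2 < 1 / 4) :
    boundaryRadius lam ε ^ 2 + (lam / boundaryRadius lam ε) ^ 2 = 1 := by
  have hr := (boundaryRadius_pos hε h0 h12).ne'
  have hr2 := boundaryRadius_sq hε h0 h12
  have hs2 : √(1 / 4 - lam ^ 2) ^ 2 = 1 / 4 - lam ^ 2 := sq_sqrt (by linarith)
  field_simp
  linear_combination (boundaryRadius lam ε ^ 2 + ε * √(1 / 4 - lam ^ 2) - 1 / 2) * hr2 +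
    √(1 / 4 - lam ^ 2) ^ 2 * hε + hs2

end

lemma sqrt_one_sub_four_mul_sq (lam : ℝ) :
    √(1 - 4 * lam ^ 2) = 2 * √(1 / 4 - lam ^ 2) := by
  rw [show 1 - 4 * lam ^ 2 = 2 ^ 2 * (1 / 4 - lam ^ 2) by ring, sqrt_mul (by norm_num),
    sqrt_sq (by norm_num)]

end LagrangianCatenoid

open LagrangianCatenoid in
/-- on the boundary circle `r = r_±`, the vector `ν_±` is a unit vector which
is a multiple of `X_r`, orthogonal to `X_φ`, and `ν_± = √(1-4λ²)·X ∓ 2λ·JX`. -/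
theorem stmt4 (lam : ℝ) (h0 : 0 < |lam|) (h12 : |lam| < 1 / 2)
    (ε : ℝ) (hε : ε = 1 ∨ ε = -1) (φ : ℝ) :
    ‖nu lam ε φ‖ = 1 ∧
    (∃ t : ℝ, nu lam ε φ =
      t • deriv (fun s => X lam s φ) (Real.sqrt (1 / 2 + ε * Real.sqrt (1 / 4 - lam ^ 2)))) ∧
    (inner ℝ (nu lam ε φ)
      (deriv (fun ψ => X lam (Real.sqrt (1 / 2 + ε * Real.sqrt (1 / 4 - lam ^ 2))) ψ) φ) : ℝ) = 0 ∧
    nu lam ε φ =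
      Real.sqrt (1 - 4 * lam ^ 2) •
          X lam (Real.sqrt (1 / 2 + ε * Real.sqrt (1 / 4 - lam ^ 2))) φ
        - (ε * 2 * lam) •
          Jmap (X lam (Real.sqrt (1 / 2 + ε * Real.sqrt (1 / 4 - lam ^ 2))) φ) := by
  have hε2 : ε ^ 2 = 1 := by rcases hε with rfl | rfl <;> norm_num
  have hlam0 : 0 < lam ^ 2 := by rw [← sq_abs]; positivity
  have hlam : lam ^ 2 < 1 / 4 := by nlinarith [sq_abs lam]
  have hr := (boundaryRadius_pos hε2 hlam0 hlam).ne'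
  have hr2 := boundaryRadius_sq hε2 hlam0 hlam
  have hs2 : √(1 / 4 - lam ^ 2) ^ 2 = 1 / 4 - lam ^ 2 := sq_sqrt (by linarith)
  rw [show √(1 / 2 + ε * √(1 / 4 - lam ^ 2)) = boundaryRadius lam ε from rfl]
  simp only [nu_eq_smul_conormal]
  refine ⟨?_, ⟨ε * boundaryRadius lam ε, ?_⟩, ?_, ?_⟩
  · rw [norm_smul, norm_conormal, boundaryRadius_sq_add_div_sq hε2 hlam0 hlam, sqrt_one, mul_one,
      Real.norm_eq_abs, ← sqrt_sq_eq_abs, hε2, sqrt_one]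
  · rw [conormal_eq_smul_deriv_radius lam φ hr, smul_smul]
  · rw [inner_smul_left, inner_conormal_deriv_angle, mul_zero]
  · rw [sqrt_one_sub_four_mul_sq]
    apply smul_conormal_eq_sub_smul_J lam φ hr
    · linear_combination (2 * √(1 / 4 - lam ^ 2) - ε) * hr2 + 2 * ε * hs2 -
        √(1 / 4 - lam ^ 2) * hε2
    · linear_combination -(2 * ε * lam) * hr2 - 2 * √(1 / 4 - lam ^ 2) * lam * hε2
end

section
/- Let 0 < |λ| < 1/2 and r_± = √(1/2 ± √(1/4 - λ²)). Then the contact angles θ_± along the two boundary circles of the Lagrangian catenoid, defined by ν_± = sin θ_± · X + cos θ_± · JX, satisfy sin θ_± = √(1-4λ²) and cos θ_± = ∓2λ; in particular cos θ₊ + cos θ₋ = 0 and θ_± ≠ π/2. -/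
open Real

noncomputable def catenoidRadius (lam ε : ℝ) : ℝ := √(1 / 2 + ε * √(1 / 4 - lam ^ 2))

lemma catenoidRadius_one (lam : ℝ) :
    catenoidRadius lam 1 = √(1 / 2 + √(1 / 4 - lam ^ 2)) := by
  rw [catenoidRadius, one_mul]

lemma catenoidRadius_neg_one (lam : ℝ) :
    catenoidRadius lam (-1) = √(1 / 2 - √(1 / 4 - lam ^ 2)) := by
  rw [catenoidRadius, neg_one_mul, ← sub_eq_add_neg]

lemma half_add_mul_sqrt_pos {lam ε : ℝ} (hε : ε ^ 2 = 1) (h0 : 0 < |lam|) (h12 : |lam| < 1 / 2) :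
    0 < 1 / 2 + ε * √(1 / 4 - lam ^ 2) := by
  have hlam : 0 < lam ^ 2 := by simpa only [sq_abs] using pow_pos h0 2
  have hs : √(1 / 4 - lam ^ 2) ^ 2 = 1 / 4 - lam ^ 2 := sq_sqrt (by nlinarith [sq_abs lam])
  nlinarith [sqrt_nonneg (1 / 4 - lam ^ 2), sq_nonneg (ε * √(1 / 4 - lam ^ 2) + 1 / 2)]

lemma catenoidRadius_sq_add_div_sq {lam ε : ℝ} (hε : ε ^ 2 = 1) (h0 : 0 < |lam|)
    (h12 : |lam| < 1 / 2) :
    catenoidRadius lam ε ^ 2 + (lam / catenoidRadius lam ε) ^ 2 = 1 := by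
  have hpos := half_add_mul_sqrt_pos hε h0 h12
  have hr : catenoidRadius lam ε ^ 2 = 1 / 2 + ε * √(1 / 4 - lam ^ 2) := sq_sqrt hpos.le
  have hs : √(1 / 4 - lam ^ 2) ^ 2 = 1 / 4 - lam ^ 2 :=
    sq_sqrt (by nlinarith [sq_abs lam])
  have hquartic : catenoidRadius lam ε ^ 4 - catenoidRadius lam ε ^ 2 + lam ^ 2 = 0 := by
    linear_combination (catenoidRadius lam ε ^ 2 + 1 / 2 + ε * √(1 / 4 - lam ^ 2) - 1) * hr
      + hs + (√(1 / 4 - lam ^ 2)) ^ 2 * hε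
  have hr0 : catenoidRadius lam ε ≠ 0 := by
    rintro h
    rw [h] at hr
    linarith
  field_simp
  linear_combination hquartic

lemma eq_neg_two_mul_of_smul_eq_smul_add_smul_rotate {a b ε s c : ℝ} (hab : a ^ 2 + b ^ 2 = 1)
    (h0 : ε * a = s * a + -(c * b)) (h1 : -(ε * b) = s * b + c * a) :
    c = -(2 * ε * (a * b)) := by
  linear_combination b * h0 - a * h1 - c * hab

lemma cos_eq_of_nu_eq {lam ε θ : ℝ} (hε : ε ^ 2 = 1) (h0 : 0 < |lam|) (h12 : |lam| < 1 / 2)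
    (h : nu lam ε 0 = sin θ • X lam (catenoidRadius lam ε) 0
      + cos θ • Jmap (X lam (catenoidRadius lam ε) 0)) :
    cos θ = -(2 * ε * lam) := by
  have hunit := catenoidRadius_sq_add_div_sq hε h0 h12
  have hr0 : catenoidRadius lam ε ≠ 0 := by
    rintro hr
    simp [hr] at hunit
  have e0 := congrArg (fun v => v 0) h
  have e1 := congrArg (fun v => v 1) h
  simp only [nu, ← catenoidRadius.eq_1] at e0 e1
  simp only [X, Jmap, WithLp.equiv_symm_apply, PiLp.add_apply, PiLp.smul_apply, smul_eq_mul,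
    Matrix.cons_val_zero, Matrix.cons_val_one, Matrix.cons_val, Fin.isValue, cos_zero, sin_zero,
    mul_one, mul_zero, neg_zero, mul_neg] at e0 e1
  have hcos := eq_neg_two_mul_of_smul_eq_smul_add_smul_rotate hunit e0 e1
  rwa [mul_div_cancel₀ _ hr0] at hcos

lemma contact_angle_of_nu_eq {lam ε θ : ℝ} (hε : ε ^ 2 = 1) (h0 : 0 < |lam|)
    (h12 : |lam| < 1 / 2) (hθ : θ ∈ Set.Icc 0 π)
    (h : nu lam ε 0 = sin θ • X lam (catenoidRadius lam ε) 0
      + cos θ • Jmap (X lam (catenoidRadius lam ε) 0)) :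
    sin θ = √(1 - 4 * lam ^ 2) ∧ cos θ = -(2 * ε * lam) ∧ θ ≠ π / 2 := by
  have hcos := cos_eq_of_nu_eq hε h0 h12 h
  refine ⟨?_, hcos, ?_⟩
  · rw [sin_eq_sqrt_one_sub_cos_sq hθ.1 hθ.2, hcos]
    congr 1
    linear_combination -4 * lam ^ 2 * hε
  · rintro rfl
    rw [cos_pi_div_two] at hcos
    have hε0 : ε ≠ 0 := by
      rintro rfl
      norm_num at hε
    exact mul_ne_zero (mul_ne_zero two_ne_zero hε0) (abs_pos.mp h0) (by linarith)

/-- the contact angles `θ_±` along the two boundary circles of the Lagrangian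
catenoid, defined by `ν_± = sin θ_± · X + cos θ_± · JX`, satisfy `sin θ_± = √(1-4λ²)`,
`cos θ_± = ∓2λ`; in particular `cos θ₊ + cos θ₋ = 0` and `θ_± ≠ π/2`. -/
theorem stmt5 (lam : ℝ) (h0 : 0 < |lam|) (h12 : |lam| < 1 / 2)
    (θp θm : ℝ) (hθp : θp ∈ Set.Ico 0 Real.pi) (hθm : θm ∈ Set.Ico 0 Real.pi)
    (hp : ∀ φ : ℝ, nu lam 1 φ =
      Real.sin θp • X lam (Real.sqrt (1 / 2 + Real.sqrt (1 / 4 - lam ^ 2))) φ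
        + Real.cos θp • Jmap (X lam (Real.sqrt (1 / 2 + Real.sqrt (1 / 4 - lam ^ 2))) φ))
    (hm : ∀ φ : ℝ, nu lam (-1) φ =
      Real.sin θm • X lam (Real.sqrt (1 / 2 - Real.sqrt (1 / 4 - lam ^ 2))) φ
        + Real.cos θm • Jmap (X lam (Real.sqrt (1 / 2 - Real.sqrt (1 / 4 - lam ^ 2))) φ)) :
    Real.sin θp = Real.sqrt (1 - 4 * lam ^ 2) ∧ Real.cos θp = -(2 * lam) ∧
    Real.sin θm = Real.sqrt (1 - 4 * lam ^ 2) ∧ Real.cos θm = 2 * lam ∧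
    Real.cos θp + Real.cos θm = 0 ∧ θp ≠ Real.pi / 2 ∧ θm ≠ Real.pi / 2 := by
  obtain ⟨hsp, hcp, hp_ne⟩ := contact_angle_of_nu_eq (ε := 1) (one_pow 2) h0 h12
    (Set.Ico_subset_Icc_self hθp) (by rw [catenoidRadius_one]; exact hp 0)
  obtain ⟨hsm, hcm, hm_ne⟩ := contact_angle_of_nu_eq (ε := -1) neg_one_sq h0 h12
    (Set.Ico_subset_Icc_self hθm) (by rw [catenoidRadius_neg_one]; exact hm 0)
  refine ⟨hsp, by rw [hcp]; ring, hsm, by rw [hcm]; ring, by rw [hcp, hcm]; ring, hp_ne, hm_ne⟩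
end

section
/- Let a,b,c,d ∈ ℝ⁴, λ ≠ 0, and define X(r,φ) = (a r + λb/r) cos φ + (c r - λd/r) sin φ. If |X_r|² = (1/r²)|X_φ|² for all r > 0 and all φ, then |a| = |c|, |b| = |d|, ⟨a,b⟩ = ⟨c,d⟩, ⟨a,c⟩ = 0 and ⟨b,d⟩ = 0. -/
/-!
For fixed `r > 0` put `μ = λ / r²`; then `|X_r|² = |X_φ|² / r²` says
`‖cos φ (a - μ b) + sin φ (c + μ d)‖ = ‖-sin φ (a + μ b) + cos φ (c - μ d)‖`.
At `φ = 0` and at `φ = π / 4` the difference of the squared sides is a quadratic polynomial in `μ`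
with coefficients `‖a‖² - ‖c‖²`, `⟨a,b⟩ - ⟨c,d⟩`, `‖b‖² - ‖d‖²`, respectively `⟨a,c⟩`,
`⟨a,b⟩ - ⟨c,d⟩`, `⟨b,d⟩`. As `λ ≠ 0`, the radii `r = 1, 2, 3` give three distinct values of `μ`,
so all these coefficients vanish.
-/

/-- `X(r,φ) = (a r + λ b / r) cos φ + (c r - λ d / r) sin φ` in ℝ⁴. -/
noncomputable def Y (a b c d : EuclideanSpace ℝ (Fin 4)) (lam r φ : ℝ) :
    EuclideanSpace ℝ (Fin 4) :=
  Real.cos φ • (r • a + (lam / r) • b) + Real.sin φ • (r • c - (lam / r) • d)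

open Real

lemma quadratic_coeffs_eq_zero {p q s x y z : ℝ} (hxy : x ≠ y) (hxz : x ≠ z) (hyz : y ≠ z)
    (hx : p + q * x + s * x ^ 2 = 0) (hy : p + q * y + s * y ^ 2 = 0)
    (hz : p + q * z + s * z ^ 2 = 0) : p = 0 ∧ q = 0 ∧ s = 0 := by
  have hxy' : q + s * (x + y) = 0 := by
    have : (x - y) * (q + s * (x + y)) = 0 := by linear_combination hx - hy
    exact (mul_eq_zero.1 this).resolve_left (sub_ne_zero.2 hxy)
  have hxz' : q + s * (x + z) = 0 := by
    have : (x - z) * (q + s * (x + z)) = 0 := by linear_combination hx - hz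
    exact (mul_eq_zero.1 this).resolve_left (sub_ne_zero.2 hxz)
  have hs : s = 0 := by
    have : (y - z) * s = 0 := by linear_combination hxy' - hxz'
    exact (mul_eq_zero.1 this).resolve_left (sub_ne_zero.2 hyz)
  have hq : q = 0 := by linear_combination hxy' - (x + y) * hs
  exact ⟨by linear_combination hx - x * hq - x ^ 2 * hs, hq, hs⟩

section InnerProductSpace

variable {E : Type*} [NormedAddCommGroup E] [InnerProductSpace ℝ E] (a b c d : E)

def IsConformalAt (μ φ : ℝ) : Prop :=
  ‖cos φ • (a - μ • b) + sin φ • (c + μ • d)‖ = ‖-sin φ • (a + μ • b) + cos φ • (c - μ • d)‖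

variable {a b c d}

lemma IsConformalAt.norm_sub_smul_eq {μ : ℝ} (h : IsConformalAt a b c d μ 0) :
    ‖a - μ • b‖ = ‖c - μ • d‖ := by
  simpa [IsConformalAt] using h

lemma IsConformalAt.norm_add_eq_norm_sub {μ : ℝ} (h : IsConformalAt a b c d μ (π / 4)) :
    ‖(a - μ • b) + (c + μ • d)‖ = ‖(c - μ • d) - (a + μ • b)‖ := by
  have hs : (√2 / 2 : ℝ) ≠ 0 := by positivity
  simp only [IsConformalAt, cos_pi_div_four, sin_pi_div_four, neg_smul, ← smul_add,
    neg_add_eq_sub, ← smul_sub, norm_smul] at h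
  exact mul_left_cancel₀ (norm_ne_zero_iff.2 hs) h

variable (a b c d)

lemma norm_sub_smul_sq_sub_norm_sub_smul_sq (μ : ℝ) :
    ‖a - μ • b‖ ^ 2 - ‖c - μ • d‖ ^ 2 =
      (‖a‖ ^ 2 - ‖c‖ ^ 2) + (-2 * (inner ℝ a b - inner ℝ c d)) * μ +
        (‖b‖ ^ 2 - ‖d‖ ^ 2) * μ ^ 2 := by
  simp only [norm_sub_sq_real, norm_smul, inner_smul_right, mul_pow, norm_eq_abs, sq_abs]
  ring

lemma norm_add_sq_sub_norm_sub_sq (μ : ℝ) :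
    ‖(a - μ • b) + (c + μ • d)‖ ^ 2 - ‖(c - μ • d) - (a + μ • b)‖ ^ 2 =
      4 * inner ℝ a c + (-4 * (inner ℝ a b - inner ℝ c d)) * μ + (-4 * inner ℝ b d) * μ ^ 2 := by
  simp only [← real_inner_self_eq_norm_sq, inner_add_left, inner_add_right, inner_sub_left,
    inner_sub_right, real_inner_smul_left, real_inner_smul_right, real_inner_comm a,
    real_inner_comm b c, real_inner_comm b d, real_inner_comm c d]
  ring

variable {a b c d}

theorem norm_eq_and_inner_eq_of_isConformalAt {μ₁ μ₂ μ₃ : ℝ}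
    (h₁₂ : μ₁ ≠ μ₂) (h₁₃ : μ₁ ≠ μ₃) (h₂₃ : μ₂ ≠ μ₃)
    (h₁ : ∀ φ, IsConformalAt a b c d μ₁ φ) (h₂ : ∀ φ, IsConformalAt a b c d μ₂ φ)
    (h₃ : ∀ φ, IsConformalAt a b c d μ₃ φ) :
    ‖a‖ = ‖c‖ ∧ ‖b‖ = ‖d‖ ∧ inner ℝ a b = inner ℝ c d ∧ inner ℝ a c = 0 ∧ inner ℝ b d = 0 := by
  have radial {μ} (h : ∀ φ, IsConformalAt a b c d μ φ) :
      (‖a‖ ^ 2 - ‖c‖ ^ 2) + (-2 * (inner ℝ a b - inner ℝ c d)) * μ +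
        (‖b‖ ^ 2 - ‖d‖ ^ 2) * μ ^ 2 = 0 := by
    rw [← norm_sub_smul_sq_sub_norm_sub_smul_sq, (h 0).norm_sub_smul_eq, sub_self]
  have angular {μ} (h : ∀ φ, IsConformalAt a b c d μ φ) :
      4 * inner ℝ a c + (-4 * (inner ℝ a b - inner ℝ c d)) * μ +
        (-4 * inner ℝ b d) * μ ^ 2 = 0 := by
    rw [← norm_add_sq_sub_norm_sub_sq, (h (π / 4)).norm_add_eq_norm_sub, sub_self]
  obtain ⟨haa, hab, hbb⟩ :=
    quadratic_coeffs_eq_zero h₁₂ h₁₃ h₂₃ (radial h₁) (radial h₂) (radial h₃)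
  obtain ⟨hac, -, hbd⟩ :=
    quadratic_coeffs_eq_zero h₁₂ h₁₃ h₂₃ (angular h₁) (angular h₂) (angular h₃)
  refine ⟨(sq_eq_sq₀ (norm_nonneg _) (norm_nonneg _)).1 (by linarith),
    (sq_eq_sq₀ (norm_nonneg _) (norm_nonneg _)).1 (by linarith), by linarith, by linarith,
    by linarith⟩

end InnerProductSpace

section Y

variable (a b c d : EuclideanSpace ℝ (Fin 4)) (lam : ℝ)

lemma hasDerivAt_Y_radius {r : ℝ} (hr : r ≠ 0) (φ : ℝ) :
    HasDerivAt (fun s => Y a b c d lam s φ)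
      (cos φ • (a - (lam / r ^ 2) • b) + sin φ • (c + (lam / r ^ 2) • d)) r := by
  have hinv : HasDerivAt (fun s : ℝ => lam / s) (-(lam / r ^ 2)) r := by
    simpa [div_eq_mul_inv] using (hasDerivAt_inv hr).const_mul lam
  have hY :=
    ((((hasDerivAt_id r).smul_const a).add (hinv.smul_const b)).const_smul (cos φ)).add
      ((((hasDerivAt_id r).smul_const c).sub (hinv.smul_const d)).const_smul (sin φ))
  exact hY.congr_deriv (by module)

lemma hasDerivAt_Y_angle (r φ : ℝ) :
    HasDerivAt (fun ψ => Y a b c d lam r ψ)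
      (-sin φ • (r • a + (lam / r) • b) + cos φ • (r • c - (lam / r) • d)) φ :=
  ((hasDerivAt_cos φ).smul_const _).add ((hasDerivAt_sin φ).smul_const _)

lemma isConformalAt_of_norm_deriv_Y_sq_eq {r φ : ℝ} (hr : 0 < r)
    (h : ‖deriv (fun s => Y a b c d lam s φ) r‖ ^ 2 =
      (1 / r ^ 2) * ‖deriv (fun ψ => Y a b c d lam r ψ) φ‖ ^ 2) :
    IsConformalAt a b c d (lam / r ^ 2) φ := by
  have hscale : -sin φ • (r • a + (lam / r) • b) + cos φ • (r • c - (lam / r) • d) =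
      r • (-sin φ • (a + (lam / r ^ 2) • b) + cos φ • (c - (lam / r ^ 2) • d)) := by
    match_scalars <;> field_simp
  rw [(hasDerivAt_Y_radius a b c d lam hr.ne' φ).deriv,
    (hasDerivAt_Y_angle a b c d lam r φ).deriv, hscale, norm_smul, mul_pow, norm_eq_abs, sq_abs,
    one_div, inv_mul_cancel_left₀ (by positivity)] at h
  exact (sq_eq_sq₀ (norm_nonneg _) (norm_nonneg _)).1 h

end Y

/-- if `|X_r|² = (1/r²)|X_φ|²` for all `r > 0` and all `φ`, then
`|a| = |c|`, `|b| = |d|`, `⟨a,b⟩ = ⟨c,d⟩`, `⟨a,c⟩ = 0` and `⟨b,d⟩ = 0`. -/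
theorem stmt6 (a b c d : EuclideanSpace ℝ (Fin 4)) (lam : ℝ) (hlam : lam ≠ 0)
    (hconf : ∀ r : ℝ, 0 < r → ∀ φ : ℝ,
      ‖deriv (fun s => Y a b c d lam s φ) r‖ ^ 2 =
        (1 / r ^ 2) * ‖deriv (fun ψ => Y a b c d lam r ψ) φ‖ ^ 2) :
    ‖a‖ = ‖c‖ ∧ ‖b‖ = ‖d‖ ∧ (inner ℝ a b : ℝ) = (inner ℝ c d : ℝ) ∧
      (inner ℝ a c : ℝ) = 0 ∧ (inner ℝ b d : ℝ) = 0 := by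
  have conformal (r : ℝ) (hr : 0 < r) (φ : ℝ) : IsConformalAt a b c d (lam / r ^ 2) φ :=
    isConformalAt_of_norm_deriv_Y_sq_eq a b c d lam hr (hconf r hr φ)
  have hμ {x y : ℝ} (h : x ≠ y) : lam / x ≠ lam / y := by
    simpa [div_eq_mul_inv, hlam] using h
  exact norm_eq_and_inner_eq_of_isConformalAt
    (hμ (by norm_num)) (hμ (by norm_num)) (hμ (by norm_num)) (conformal 1 one_pos) (conformal 2 two_pos) (conformal 3 three_pos)
end

section
/- Let a,b,c,d ∈ ℝ⁴ with |a|=|c|, |b|=|d|, ⟨a,b⟩=⟨c,d⟩, ⟨a,c⟩=⟨b,d⟩=0, ⟨a,d⟩+⟨b,c⟩=0, and λ ≠ 0. Let X(r,φ) = (a r + λb/r) cos φ + (c r - λd/r) sin φ and suppose for two distinct positive radii r₊ ≠ r₋ one has |X(r_±, φ)| = 1 for all φ. Then |a|² r_±² + λ²|b|²/r_±² = 1 and ⟨a,d⟩ = ⟨b,c⟩ = ⟨a,b⟩ = ⟨c,d⟩ = 0. -/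
open Real RealInnerProductSpace

section InnerProductSpace

variable {E : Type*} [NormedAddCommGroup E] [InnerProductSpace ℝ E]

theorem orthonormal_pair_of_forall_norm_cos_smul_add_sin_smul_eq_one {u v : E}
    (h : ∀ φ : ℝ, ‖cos φ • u + sin φ • v‖ = 1) :
    ‖u‖ = 1 ∧ ‖v‖ = 1 ∧ ⟪u, v⟫ = 0 := by
  have hu : ‖u‖ = 1 := by simpa using h 0
  have hv : ‖v‖ = 1 := by simpa using h (π / 2)
  refine ⟨hu, hv, ?_⟩
  have hplus := h (π / 4)
  have hminus := h (-(π / 4))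
  rw [cos_neg, sin_neg, cos_pi_div_four, sin_pi_div_four, neg_smul, ← sub_eq_add_neg,
    ← smul_sub, norm_smul] at hminus
  rw [cos_pi_div_four, sin_pi_div_four, ← smul_add, norm_smul] at hplus
  have hsum : ‖u + v‖ = ‖u - v‖ :=
    mul_left_cancel₀ (norm_ne_zero_iff.mpr (by positivity)) (hplus.trans hminus.symm)
  have := congrArg (· ^ 2) hsum
  simp only [norm_add_sq_real, norm_sub_sq_real] at this
  linarith

theorem norm_smul_add_div_smul_sq {r : ℝ} (hr : r ≠ 0) (lam : ℝ) (x y : E) :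
    ‖r • x + (lam / r) • y‖ ^ 2 =
      ‖x‖ ^ 2 * r ^ 2 + 2 * lam * ⟪x, y⟫ + lam ^ 2 * ‖y‖ ^ 2 / r ^ 2 := by
  rw [norm_add_sq_real, norm_smul, norm_smul, real_inner_smul_left, real_inner_smul_right,
    mul_pow, mul_pow, norm_eq_abs, norm_eq_abs, sq_abs, sq_abs]
  field_simp

theorem norm_smul_sub_div_smul_sq {r : ℝ} (hr : r ≠ 0) (lam : ℝ) (x y : E) :
    ‖r • x - (lam / r) • y‖ ^ 2 =
      ‖x‖ ^ 2 * r ^ 2 - 2 * lam * ⟪x, y⟫ + lam ^ 2 * ‖y‖ ^ 2 / r ^ 2 := by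
  rw [sub_eq_add_neg, ← neg_smul, ← neg_div, norm_smul_add_div_smul_sq hr]
  ring

theorem inner_smul_add_div_smul_smul_sub_div_smul {r : ℝ} (hr : r ≠ 0) (lam : ℝ) (a b c d : E) :
    ⟪r • a + (lam / r) • b, r • c - (lam / r) • d⟫ =
      r ^ 2 * ⟪a, c⟫ - lam * ⟪a, d⟫ + lam * ⟪b, c⟫ - lam ^ 2 / r ^ 2 * ⟪b, d⟫ := by
  simp only [inner_add_left, inner_sub_right, real_inner_smul_left, real_inner_smul_right]
  field_simp
  ring

end InnerProductSpace

theorem circle_equations_of_forall_norm_Y_eq_one {a b c d : EuclideanSpace ℝ (Fin 4)}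
    {lam r : ℝ} (hr : r ≠ 0) (hU : ∀ φ : ℝ, ‖Y a b c d lam r φ‖ = 1) :
    ‖a‖ ^ 2 * r ^ 2 + 2 * lam * ⟪a, b⟫ + lam ^ 2 * ‖b‖ ^ 2 / r ^ 2 = 1 ∧
      ‖c‖ ^ 2 * r ^ 2 - 2 * lam * ⟪c, d⟫ + lam ^ 2 * ‖d‖ ^ 2 / r ^ 2 = 1 ∧
      r ^ 2 * ⟪a, c⟫ - lam * ⟪a, d⟫ + lam * ⟪b, c⟫ - lam ^ 2 / r ^ 2 * ⟪b, d⟫ = 0 := by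
  obtain ⟨hu, hv, huv⟩ := orthonormal_pair_of_forall_norm_cos_smul_add_sin_smul_eq_one hU
  rw [← norm_smul_add_div_smul_sq hr, ← norm_smul_sub_div_smul_sq hr,
    ← inner_smul_add_div_smul_smul_sub_div_smul hr, hu, hv, huv]
  norm_num

theorem stmt8_general (a b c d : EuclideanSpace ℝ (Fin 4)) (lam : ℝ) (hlam : lam ≠ 0)
    (hac : ‖a‖ = ‖c‖) (hbd : ‖b‖ = ‖d‖) (hab : (inner ℝ a b) = (inner ℝ c d))
    (hac0 : (inner ℝ a c) = 0) (hbd0 : (inner ℝ b d) = 0)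
    (hadbc : (inner ℝ a d) + (inner ℝ b c) = 0)
    (rp rm : ℝ) (hrp : 0 < rp) (hrm : 0 < rm)
    (hUp : ∀ φ : ℝ, ‖Y a b c d lam rp φ‖ = 1)
    (hUm : ∀ φ : ℝ, ‖Y a b c d lam rm φ‖ = 1) :
    (‖a‖ ^ 2 * rp ^ 2 + lam ^ 2 * ‖b‖ ^ 2 / rp ^ 2 = 1) ∧
    (‖a‖ ^ 2 * rm ^ 2 + lam ^ 2 * ‖b‖ ^ 2 / rm ^ 2 = 1) ∧
    (inner ℝ a d) = 0 ∧ (inner ℝ b c) = 0 ∧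
    (inner ℝ a b) = 0 ∧ (inner ℝ c d) = 0 := by
  obtain ⟨hu_p, hv_p, huv_p⟩ := circle_equations_of_forall_norm_Y_eq_one hrp.ne' hUp
  obtain ⟨hu_m, -, -⟩ := circle_equations_of_forall_norm_Y_eq_one hrm.ne' hUm
  rw [← hac, ← hbd, ← hab] at hv_p
  have hab0 : ⟪a, b⟫ = 0 := by
    have : lam * (4 * ⟪a, b⟫) = 0 := by linear_combination hu_p - hv_p
    linarith [(mul_eq_zero.mp this).resolve_left hlam]
  have hbc_ad : ⟪b, c⟫ = ⟪a, d⟫ := by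
    have : lam * (⟪b, c⟫ - ⟪a, d⟫) = 0 := by
      linear_combination huv_p - rp ^ 2 * hac0 + lam ^ 2 / rp ^ 2 * hbd0
    linarith [(mul_eq_zero.mp this).resolve_left hlam]
  refine ⟨?_, ?_, by linarith, by linarith, hab0, hab ▸ hab0⟩
  · linear_combination hu_p - 2 * lam * hab0
  · linear_combination hu_m - 2 * lam * hab0

/-- under the stated orthogonality relations, if `|X(r_±,φ)| = 1` for all `φ`
for two distinct positive radii `r₊ ≠ r₋`, then `|a|² r_±² + λ²|b|²/r_±² = 1` and
`⟨a,d⟩ = ⟨b,c⟩ = ⟨a,b⟩ = ⟨c,d⟩ = 0`. -/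
theorem stmt8 (a b c d : EuclideanSpace ℝ (Fin 4)) (lam : ℝ) (hlam : lam ≠ 0)
    (hac : ‖a‖ = ‖c‖) (hbd : ‖b‖ = ‖d‖) (hab : (inner ℝ a b) = (inner ℝ c d))
    (hac0 : (inner ℝ a c) = 0) (hbd0 : (inner ℝ b d) = 0)
    (hadbc : (inner ℝ a d) + (inner ℝ b c) = 0)
    (rp rm : ℝ) (hrp : 0 < rp) (hrm : 0 < rm) (hne : rp ≠ rm)
    (hUp : ∀ φ : ℝ, ‖Y a b c d lam rp φ‖ = 1)
    (hUm : ∀ φ : ℝ, ‖Y a b c d lam rm φ‖ = 1) :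
    (‖a‖ ^ 2 * rp ^ 2 + lam ^ 2 * ‖b‖ ^ 2 / rp ^ 2 = 1) ∧
    (‖a‖ ^ 2 * rm ^ 2 + lam ^ 2 * ‖b‖ ^ 2 / rm ^ 2 = 1) ∧
    (inner ℝ a d) = 0 ∧ (inner ℝ b c) = 0 ∧
    (inner ℝ a b) = 0 ∧ (inner ℝ c d) = 0 :=
  stmt8_general a b c d lam hlam hac hbd hab hac0 hbd0 hadbc rp rm hrp hrm hUp hUm
end

section
/- Let Σⁿ ⊂ 𝔹^{2n} be a Lagrangian submanifold with Legendrian boundary ∂Σⁿ ⊂ S^{2n-1} and contact angle θ, with ν the outward conormal. Then for all tangent vectors X, Y ∈ T∂Σⁿ: (i) the second fundamental form of ∂Σⁿ in Σⁿ is B^Σ(X,Y) = -sin θ ⟨X,Y⟩ ν, and (ii) ⟨B(X,Y), Jν⟩ = cos θ ⟨X,Y⟩, where B is the second fundamental form of Σⁿ in 𝔹^{2n}. -/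
/-!
Along a curve `c` in the sphere, differentiating `‖c‖² = const` twice gives
`Re ⟪c'', c⟫ = -‖c'‖²`, and differentiating the Legendrian condition `Re ⟪c', J c⟫ = 0` gives
`Re ⟪c'', J c⟫ = -Re ⟪c', J c'⟫ = 0`. Hence `⟪c'', c⟫ = -‖c'‖²` as a complex number, and since
`ν = (sin θ + i cos θ) c` pointwise, both formulas follow by reading off real parts.
-/

open Complex
open scoped InnerProductSpace

section

variable {E : Type*} [NormedAddCommGroup E] [InnerProductSpace ℂ E]

theorem re_inner_self (x : E) : (⟪x, x⟫_ℂ).re = ‖x‖ ^ 2 := inner_self_eq_norm_sq (𝕜 := ℂ) x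

theorem re_inner_I_smul_self (x : E) : (⟪x, I • x⟫_ℂ).re = 0 := by
  simp [inner_self_eq_norm_sq_to_K, ← ofReal_pow]

theorem im_inner_eq_neg_re_inner_I_smul (x y : E) : (⟪x, y⟫_ℂ).im = -(⟪x, I • y⟫_ℂ).re := by
  simp

theorem inner_smul_add_smul_I_smul (x y : E) (a b : ℝ) :
    ⟪x, a • y + b • (I • y)⟫_ℂ = (a + b * I) * ⟪x, y⟫_ℂ := by
  simp only [inner_add_right, ← Complex.coe_smul, inner_smul_right]
  ring

theorem HasDerivAt.re_inner_add_re_inner_eq_zero {f g : ℝ → E} {f' g' : E} {t a : ℝ}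
    (hf : HasDerivAt f f' t) (hg : HasDerivAt g g' t) (hfg : ∀ s, (⟪f s, g s⟫_ℂ).re = a) :
    (⟪f', g t⟫_ℂ).re + (⟪f t, g'⟫_ℂ).re = 0 := by
  have hre := reCLM.hasFDerivAt.comp_hasDerivAt t (hf.inner ℂ hg)
  have hconst : reCLM ∘ (fun s => ⟪f s, g s⟫_ℂ) = fun _ => a := funext hfg
  rw [hconst] at hre
  simpa [add_comm, eq_comm] using (hasDerivAt_const t a).unique hre

variable {c : ℝ → E} {R : ℝ}

theorem re_inner_deriv_deriv_self (hc : ContDiff ℝ 2 c) (hnorm : ∀ s, ‖c s‖ = R) (t : ℝ) :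
    (⟪deriv (deriv c) t, c t⟫_ℂ).re = -‖deriv c t‖ ^ 2 := by
  have hdc : Differentiable ℝ c := hc.differentiable two_ne_zero
  have hdc' : Differentiable ℝ (deriv c) := (hc.deriv' (n := 1)).differentiable one_ne_zero
  have hvel_perp : ∀ s, (⟪deriv c s, c s⟫_ℂ).re = 0 := by
    intro s
    have h := (hdc s).hasDerivAt.re_inner_add_re_inner_eq_zero (hdc s).hasDerivAt
      (a := R ^ 2) (fun s => by rw [re_inner_self, hnorm])
    rwa [← inner_conj_symm (c s), conj_re, add_self_eq_zero] at h
  have h := (hdc' t).hasDerivAt.re_inner_add_re_inner_eq_zero (hdc t).hasDerivAt hvel_perp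
  rwa [re_inner_self, add_eq_zero_iff_eq_neg] at h

theorem inner_deriv_deriv_self_of_legendrian (hc : ContDiff ℝ 2 c) (hnorm : ∀ s, ‖c s‖ = R)
    (hLeg : ∀ s, (⟪deriv c s, I • c s⟫_ℂ).re = 0) (t : ℝ) :
    ⟪deriv (deriv c) t, c t⟫_ℂ = -(‖deriv c t‖ ^ 2 : ℂ) := by
  have hdc : Differentiable ℝ c := hc.differentiable two_ne_zero
  have hdc' : Differentiable ℝ (deriv c) := (hc.deriv' (n := 1)).differentiable one_ne_zero
  have hacc_J : (⟪deriv (deriv c) t, I • c t⟫_ℂ).re = 0 := by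
    have h := (hdc' t).hasDerivAt.re_inner_add_re_inner_eq_zero
      ((hdc t).hasDerivAt.const_smul I) hLeg
    rwa [re_inner_I_smul_self, add_zero] at h
  apply Complex.ext
  · rw [← ofReal_pow, neg_re, ofReal_re]
    exact re_inner_deriv_deriv_self hc hnorm t
  · rw [← ofReal_pow, neg_im, ofReal_im, neg_zero, im_inner_eq_neg_re_inner_I_smul, hacc_J,
      neg_zero]

end

theorem stmt17_general (n : ℕ) (c : ℝ → EuclideanSpace ℂ (Fin n)) (θ : ℝ → ℝ)
    (hc : ContDiff ℝ 2 c)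
    (hsphere : ∀ t, ‖c t‖ = 1)
    (hLeg : ∀ t, ((inner ℂ (deriv c t) (Complex.I • c t) : ℂ)).re = 0)
    (ν : ℝ → EuclideanSpace ℂ (Fin n))
    (hν : ∀ t, ν t = Real.sin (θ t) • c t + Real.cos (θ t) • (Complex.I • c t)) :
    ∀ t : ℝ,
      ((inner ℂ (deriv (deriv c) t) (ν t) : ℂ)).re = -Real.sin (θ t) * ‖deriv c t‖ ^ 2 ∧
      ((inner ℂ (deriv (deriv c) t) (Complex.I • ν t) : ℂ)).re =
        Real.cos (θ t) * ‖deriv c t‖ ^ 2 := by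
  intro t
  have hacc := inner_deriv_deriv_self_of_legendrian hc hsphere hLeg t
  rw [inner_smul_right, hν t, inner_smul_add_smul_I_smul, hacc]
  generalize Real.sin (θ t) = a, Real.cos (θ t) = b, ‖deriv c t‖ = r
  constructor <;> simp [← ofReal_pow]

/-- formulated along curves in the Legendrian boundary: let `c` be a curve
in `∂Σⁿ ⊂ S^{2n-1} ⊂ ℂⁿ` (so `‖c t‖ = 1`), Legendrian (`⟨c', Jc⟩_ℝ = 0`), and let
`ν = sin θ · c + cos θ · Jc` be the conormal along `c`, `θ` the contact angle. Then
(i) `⟨B^Σ(X,X), ν⟩ = ⟨c'', ν⟩ = -sin θ |X|²` where `X = c'`, i.e. `B^Σ(X,Y) = -sin θ ⟨X,Y⟩ ν`,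
and (ii) `⟨B(X,X), Jν⟩ = ⟨c'', Jν⟩ = cos θ |X|²`. -/
theorem stmt17 (n : ℕ) (c : ℝ → EuclideanSpace ℂ (Fin n)) (θ : ℝ → ℝ)
    (hc : ContDiff ℝ 2 c) (hθ : Differentiable ℝ θ)
    (hsphere : ∀ t, ‖c t‖ = 1)
    (hLeg : ∀ t, ((inner ℂ (deriv c t) (Complex.I • c t) : ℂ)).re = 0)
    (ν : ℝ → EuclideanSpace ℂ (Fin n))
    (hν : ∀ t, ν t = Real.sin (θ t) • c t + Real.cos (θ t) • (Complex.I • c t)) :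
    ∀ t : ℝ,
      ((inner ℂ (deriv (deriv c) t) (ν t) : ℂ)).re = -Real.sin (θ t) * ‖deriv c t‖ ^ 2 ∧
      ((inner ℂ (deriv (deriv c) t) (Complex.I • ν t) : ℂ)).re =
        Real.cos (θ t) * ‖deriv c t‖ ^ 2 :=
  stmt17_general n c θ hc hsphere hLeg ν hν
end
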